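/- arXiv:1705.07021 — 3 statements merged into one kernel-verified Lean document; each statement's English description precedes it below -/
import Mathlib

section
/- The sequence (p_t)_{t≥1} with p_t = 2^t b_1 b_2 ⋯ b_t is a periodic structure of η: for every t ≥ 1 one has p_t | p_{t+1}, and ⋃_{t≥1} Per_{p_t}(η) = ℤ. -/
open scoped BigOperators

-- The indicator function of the `\mathscr{B}`-free integers for
--`\mathscr{B} = {2^i b_i : i \ge 1}`. 
open Classical in
noncomputable def eta (b : ℕ → ℕ) : ℤ → ℕ := fun n =>
  if (∀ i : ℕ, 1 ≤ i → ¬ ((2 : ℤ) ^ i * (b i : ℤ) ∣ n)) then 1 else 0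

-- `Per x s` is the set of `s`-periodic positions of `x`. 
def Per (x : ℤ → ℕ) (s : ℕ) : Set ℤ := {n : ℤ | ∀ k : ℤ, x (n + k * s) = x n}

-- `pp b t = 2^t * b_1 * b_2 * \cdots * b_t`. 
def pp (b : ℕ → ℕ) (t : ℕ) : ℕ := 2 ^ t * ∏ i ∈ Finset.Icc 1 t, b i

/-!
If `2^i b_i ∣ n`, then `2^i b_i` divides every `n + k p_i`, so `η` vanishes on `n + p_i ℤ`.
If `n ≠ 0`, pick `t` with `2^t ∤ n`. For `i ≤ t` the modulus `2^i b_i` divides `p_t`, and for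
`i > t` neither `n` nor any `n + k p_t` is divisible by `2^t`, let alone by `2^i b_i`; so
translating `n` by multiples of `p_t` changes none of the divisibilities that define `η`.
-/

lemma pp_succ (b : ℕ → ℕ) (t : ℕ) : pp b (t + 1) = pp b t * (2 * b (t + 1)) := by
  rw [pp, pp, Finset.prod_Icc_succ_top (by omega : 1 ≤ t + 1)]
  ring

lemma two_pow_dvd_pp (b : ℕ → ℕ) (t : ℕ) : (2 : ℤ) ^ t ∣ (pp b t : ℤ) := by
  exact_mod_cast dvd_mul_right (2 ^ t) _

lemma two_pow_mul_dvd_pp (b : ℕ → ℕ) {i t : ℕ} (hi : 1 ≤ i) (hit : i ≤ t) :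
    (2 : ℤ) ^ i * (b i : ℤ) ∣ (pp b t : ℤ) := by
  exact_mod_cast mul_dvd_mul (pow_dvd_pow 2 hit)
    (Finset.dvd_prod_of_mem b (Finset.mem_Icc.mpr ⟨hi, hit⟩))

lemma eta_eq_zero_of_dvd (b : ℕ → ℕ) {i : ℕ} {n : ℤ} (hi : 1 ≤ i)
    (h : (2 : ℤ) ^ i * (b i : ℤ) ∣ n) : eta b n = 0 :=
  if_neg fun hfree => hfree i hi h

lemma eta_congr (b : ℕ → ℕ) {m n : ℤ}
    (h : ∀ i : ℕ, 1 ≤ i →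
      ((2 : ℤ) ^ i * (b i : ℤ) ∣ m ↔ (2 : ℤ) ^ i * (b i : ℤ) ∣ n)) :
    eta b m = eta b n := by
  have hfree : (∀ i : ℕ, 1 ≤ i → ¬ (2 : ℤ) ^ i * (b i : ℤ) ∣ m) ↔
      (∀ i : ℕ, 1 ≤ i → ¬ (2 : ℤ) ^ i * (b i : ℤ) ∣ n) :=
    forall₂_congr fun i hi => not_congr (h i hi)
  unfold eta
  congr 1
  exact propext hfree

lemma mem_Per_eta_of_two_pow_mul_dvd (b : ℕ → ℕ) {i : ℕ} {n : ℤ} (hi : 1 ≤ i)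
    (h : (2 : ℤ) ^ i * (b i : ℤ) ∣ n) : n ∈ Per (eta b) (pp b i) := fun k => by
  have hk : (2 : ℤ) ^ i * (b i : ℤ) ∣ n + k * pp b i :=
    dvd_add h ((two_pow_mul_dvd_pp b hi le_rfl).mul_left k)
  rw [eta_eq_zero_of_dvd b hi hk, eta_eq_zero_of_dvd b hi h]

lemma mem_Per_eta_of_not_two_pow_dvd (b : ℕ → ℕ) {t : ℕ} {n : ℤ}
    (hn : ¬ (2 : ℤ) ^ t ∣ n) : n ∈ Per (eta b) (pp b t) := fun k => by
  have hshift : ∀ d : ℤ, d ∣ pp b t → (d ∣ n + k * pp b t ↔ d ∣ n) := fun d hd =>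
    dvd_add_left (hd.mul_left k)
  refine eta_congr b fun i hi => ?_
  rcases le_or_gt i t with hit | hti
  · exact hshift _ (two_pow_mul_dvd_pp b hi hit)
  · have hsub : (2 : ℤ) ^ t ∣ (2 : ℤ) ^ i * (b i : ℤ) :=
      dvd_mul_of_dvd_left (pow_dvd_pow 2 hti.le) _
    have hn' : ¬ (2 : ℤ) ^ t ∣ n + k * pp b t := by
      rwa [hshift _ (two_pow_dvd_pp b t)]
    exact iff_of_false (fun h => hn' (hsub.trans h)) (fun h => hn (hsub.trans h))

lemma not_two_pow_natAbs_dvd {n : ℤ} (hn : n ≠ 0) : ¬ (2 : ℤ) ^ n.natAbs ∣ n := by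
  intro h
  have hdvd : 2 ^ n.natAbs ∣ n.natAbs := by
    simpa [Int.natAbs_pow] using Int.natAbs_dvd_natAbs.mpr h
  have hle : 2 ^ n.natAbs ≤ n.natAbs := Nat.le_of_dvd (Int.natAbs_pos.mpr hn) hdvd
  exact (Nat.lt_two_pow_self).not_ge hle

theorem pp_periodic_structure_general (b : ℕ → ℕ) :
    (∀ t : ℕ, 1 ≤ t → pp b t ∣ pp b (t + 1)) ∧
      (⋃ t : ℕ, ⋃ _ : 1 ≤ t, Per (eta b) (pp b t)) = (Set.univ : Set ℤ) := by
  refine ⟨fun t _ => ⟨2 * b (t + 1), pp_succ b t⟩, Set.eq_univ_of_forall fun n => ?_⟩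
  simp only [Set.mem_iUnion]
  rcases eq_or_ne n 0 with rfl | hn
  · exact ⟨1, le_rfl, mem_Per_eta_of_two_pow_mul_dvd b le_rfl (dvd_zero _)⟩
  · exact ⟨n.natAbs, Int.natAbs_pos.mpr hn,
      mem_Per_eta_of_not_two_pow_dvd b (not_two_pow_natAbs_dvd hn)⟩

theorem pp_periodic_structure (b : ℕ → ℕ)
    (hodd : ∀ i : ℕ, 1 ≤ i → Odd (b i))
    (hgt : ∀ i : ℕ, 1 ≤ i → 1 < b i)
    (hcop : ∀ i j : ℕ, 1 ≤ i → 1 ≤ j → i ≠ j → Nat.Coprime (b i) (b j)) :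
    (∀ t : ℕ, 1 ≤ t → pp b t ∣ pp b (t + 1)) ∧
      (⋃ t : ℕ, ⋃ _ : 1 ≤ t, Per (eta b) (pp b t)) = (Set.univ : Set ℤ) :=
  pp_periodic_structure_general b
end

section
/- The sequence η has property (Sh) (separated holes): the minimal cyclic gap k_t between consecutive holes at level t (i.e. min({I_{j+1} − I_j : 1 ≤ j ≤ s_t − 1} ∪ {p_t − I_{s_t} + I_1}), where I_1 < … < I_{s_t} list all holes at level t) tends to infinity as t → ∞. -/
open scoped BigOperators

-- `s` is a hole at level `t`. 
def Hole (b : ℕ → ℕ) (t : ℕ) (s : ℤ) : Prop :=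
  0 ≤ s ∧ s < (pp b t : ℤ) ∧ s ∉ Per (eta b) (pp b t)

/-!
Every hole at level `t` is a multiple of `2^t`: off the multiples of `2^t`, adding a multiple
of `p_t` changes divisibility neither by the moduli `2^i b_i` with `i ≤ t`, which divide `p_t`,
nor by those with `i > t`, which are multiples of `2^t`. Two distinct holes in `[0, p_t)`
therefore differ, cyclically modulo `p_t` (itself a multiple of `2^t`), by a positive multiple
of `2^t`.
-/

lemma Int.le_emod_sub_of_dvd {d p s s' : ℤ} (hs : d ∣ s) (hs' : d ∣ s') (hp : d ∣ p)
    (hs0 : 0 ≤ s) (hsp : s < p) (hs'0 : 0 ≤ s') (hs'p : s' < p) (hne : s ≠ s') :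
    d ≤ (s' - s) % p := by
  have hp0 : p ≠ 0 := by omega
  have hdvd : d ∣ (s' - s) % p := by
    rw [Int.emod_def]
    exact dvd_sub (dvd_sub hs' hs) (hp.mul_right _)
  have hne0 : (s' - s) % p ≠ 0 := by
    intro h
    rw [← Int.emod_eq_emod_iff_emod_sub_eq_zero, Int.emod_eq_of_lt hs'0 hs'p,
      Int.emod_eq_of_lt hs0 hsp] at h
    exact hne h.symm
  exact Int.le_of_dvd (lt_of_le_of_ne (Int.emod_nonneg _ hp0) hne0.symm) hdvd

section

variable {b : ℕ → ℕ} {t : ℕ}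

lemma pow_mul_dvd_pp {i : ℕ} (hi : 1 ≤ i) (hit : i ≤ t) : (2 : ℤ) ^ i * b i ∣ pp b t := by
  have : 2 ^ i * b i ∣ pp b t :=
    mul_dvd_mul (pow_dvd_pow 2 hit) (Finset.dvd_prod_of_mem b (Finset.mem_Icc.mpr ⟨hi, hit⟩))
  exact_mod_cast this

lemma pow_dvd_pp : (2 : ℤ) ^ t ∣ pp b t := by
  exact_mod_cast dvd_mul_right (2 ^ t) (∏ i ∈ Finset.Icc 1 t, b i)

lemma eta_add_mul_pp {n : ℤ} (hn : ¬ (2 : ℤ) ^ t ∣ n) (k : ℤ) :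
    eta b (n + k * pp b t) = eta b n := by
  have hk : (2 : ℤ) ^ t ∣ k * pp b t := pow_dvd_pp.mul_left k
  suffices h : ∀ i, 1 ≤ i → ((2 : ℤ) ^ i * b i ∣ n + k * pp b t ↔ (2 : ℤ) ^ i * b i ∣ n) by
    unfold eta
    rw [forall₂_congr fun i hi => not_congr (h i hi)]
  intro i hi
  rcases le_or_gt i t with hit | hti
  · exact dvd_add_left ((pow_mul_dvd_pp hi hit).mul_left k)
  · have h2t : (2 : ℤ) ^ t ∣ 2 ^ i * b i := (pow_dvd_pow 2 hti.le).mul_right _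
    refine iff_of_false (fun h => hn ?_) (fun h => hn (h2t.trans h))
    exact (dvd_add_left hk).mp (h2t.trans h)

lemma Hole.pow_dvd {s : ℤ} (hs : Hole b t s) : (2 : ℤ) ^ t ∣ s := by
  by_contra h
  exact hs.2.2 (eta_add_mul_pp h)

end

theorem eta_separated_holes_general (b : ℕ → ℕ) :
    ∀ M : ℤ, ∃ T : ℕ, ∀ t : ℕ, T ≤ t →
      ∀ s s' : ℤ, Hole b t s → Hole b t s' → s ≠ s' →
        M ≤ (s' - s) % (pp b t : ℤ) := by
  intro M
  refine ⟨M.toNat, fun t ht s s' hs hs' hne => ?_⟩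
  calc M ≤ t := Int.toNat_le.mp ht
    _ ≤ 2 ^ t := by exact_mod_cast (Nat.lt_two_pow_self).le
    _ ≤ (s' - s) % (pp b t : ℤ) :=
      Int.le_emod_sub_of_dvd hs.pow_dvd hs'.pow_dvd pow_dvd_pp hs.1 hs.2.1 hs'.1 hs'.2.1 hne

theorem eta_separated_holes (b : ℕ → ℕ)
    (hodd : ∀ i : ℕ, 1 ≤ i → Odd (b i))
    (hgt : ∀ i : ℕ, 1 ≤ i → 1 < b i)
    (hcop : ∀ i j : ℕ, 1 ≤ i → 1 ≤ j → i ≠ j → Nat.Coprime (b i) (b j)) :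
    ∀ M : ℤ, ∃ T : ℕ, ∀ t : ℕ, T ≤ t →
      ∀ s s' : ℤ, Hole b t s → Hole b t s' → s ≠ s' →
        M ≤ (s' - s) % (pp b t : ℤ) :=
  eta_separated_holes_general b
end

section
/- The system (X_η, S) is coalescent: every continuous map U : X_η → X_η satisfying U ∘ S = S ∘ U is a homeomorphism. -/
/-!
Every point `x` of `X_η` vanishes on exactly one class `r_i(x)` modulo `2^i b_i` for each `i`,
and these classes determine `x` except at the positions `m` with `m ≡ r_i (mod 2^i)` and
`m ≢ r_i (mod b_i)` for all `i`, where both values occur. A continuous `U` commuting with `S` is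
onto by minimality and, the classes being locally constant, shifts the classes of every point by
one and the same `δ_i`. The two points differing only at an ambiguous position have distinct
preimages, so ambiguous positions of `r` yield ambiguous positions of `r - δ`; for well chosen
`r` this forces `δ_i ≡ k (mod 2^i b_i)` for a single integer `k`. Then `S^k ∘ U` keeps the
classes of `η`, whose fibre is a singleton, so it fixes `η` and, by minimality, everything.
-/

open scoped BigOperators

-- `etaB b` is the indicator `η` of the `B`-free integers, `B = {2^i b_i : i ≥ 1}`.
open Classical in
noncomputable def etaB (b : ℕ → ℕ) : ℤ → Bool := fun n =>
  if (∀ i : ℕ, 1 ≤ i → ¬ ((2 : ℤ) ^ i * (b i : ℤ) ∣ n)) then true else false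

-- `Xeta b` is `X_η`, the orbit closure of `η` under the left shift.
def Xeta (b : ℕ → ℕ) : Set (ℤ → Bool) :=
  closure {y : ℤ → Bool | ∃ n : ℤ, y = fun m => etaB b (m + n)}

open Set Function

namespace BFree

variable {b : ℕ → ℕ} {i : ℕ}

structure Admissible (b : ℕ → ℕ) : Prop where
  odd : ∀ i, 1 ≤ i → Odd (b i)
  one_lt : ∀ i, 1 ≤ i → 1 < b i
  coprime : ∀ i j, 1 ≤ i → 1 ≤ j → i ≠ j → Nat.Coprime (b i) (b j)

def modulus (b : ℕ → ℕ) (i : ℕ) : ℤ := 2 ^ i * b i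

-- Adding multiples of `period b K` does not change `η` at integers not divisible by
-- `2 ^ (K + 1)`, since it is a multiple of `2 ^ (K + 1)` and of every `modulus b i`, `i ≤ K`.
def period (b : ℕ → ℕ) (K : ℕ) : ℤ := 2 ^ (K + 1) * ∏ j ∈ Finset.Icc 1 K, (b j : ℤ)

lemma isCoprime_two_pow_of_odd {n : ℕ} (hn : Odd n) (k : ℕ) : IsCoprime ((2 : ℤ) ^ k) n := by
  exact_mod_cast Nat.isCoprime_iff_coprime.mpr ((Nat.coprime_two_left.mpr hn).pow_left k)

lemma not_dvd_two_pow_of_odd {n : ℕ} (hn : Odd n) (h1 : 1 < n) (k : ℕ) :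
    ¬ (n : ℤ) ∣ 2 ^ k := fun h => by
  have := Int.isUnit_iff.mp ((isCoprime_two_pow_of_odd hn k).isUnit_of_dvd' h dvd_rfl)
  omega

lemma modEq_modulus_iff (hodd : Odd (b i)) {a c : ℤ} :
    a ≡ c [ZMOD modulus b i] ↔ a ≡ c [ZMOD 2 ^ i] ∧ a ≡ c [ZMOD b i] :=
  (Int.modEq_and_modEq_iff_modEq_mul
    (Int.isCoprime_iff_gcd_eq_one.mp (isCoprime_two_pow_of_odd hodd i))).symm

lemma eq_of_forall_modEq_two_pow {a c : ℤ} (h : ∀ i, 1 ≤ i → a ≡ c [ZMOD 2 ^ i]) :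
    a = c := by
  have hk := h ((c - a).natAbs + 1) (by omega)
  have hlt : |c - a| < 2 ^ ((c - a).natAbs + 1) := by
    rw [Int.abs_eq_natAbs]
    exact_mod_cast (Nat.lt_two_pow_self).trans (Nat.pow_lt_pow_right (by norm_num) (by omega))
  linarith [Int.eq_zero_of_abs_lt_dvd hk.dvd hlt]

lemma not_two_pow_dvd_of_abs_lt {n : ℤ} {K : ℕ} (hn : n ≠ 0) (h : |n| < 2 ^ K) :
    ¬ (2 : ℤ) ^ K ∣ n :=
  fun hd => hn (Int.eq_zero_of_abs_lt_dvd hd h)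

lemma exists_modEq_two_pow_and_modEq (hodd : ∀ i, 1 ≤ i → Odd (b i))
    (hcop : ∀ i j, 1 ≤ i → 1 ≤ j → i ≠ j → Nat.Coprime (b i) (b j))
    (K : ℕ) (a : ℤ) {F : Finset ℕ} (hF : ∀ j ∈ F, 1 ≤ j) (c : ℕ → ℤ) :
    ∃ u : ℤ, u ≡ a [ZMOD 2 ^ K] ∧ ∀ j ∈ F, u ≡ c j [ZMOD b j] := by
  let q : Option F → ℤ := fun o => o.elim (2 ^ K) fun j => b j
  have hq : Pairwise (IsCoprime on fun o => Ideal.span {q o}) := by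
    rintro (_ | ⟨j, hj⟩) (_ | ⟨j', hj'⟩) hne <;>
      simp only [onFun, Ideal.isCoprime_span_singleton_iff, q, Option.elim]
    · exact absurd rfl hne
    · exact isCoprime_two_pow_of_odd (hodd j' (hF j' hj')) K
    · exact (isCoprime_two_pow_of_odd (hodd j (hF j hj)) K).symm
    · exact Nat.isCoprime_iff_coprime.mpr
        (hcop j j' (hF j hj) (hF j' hj') fun h => hne (by subst h; rfl))
  obtain ⟨u, hu⟩ := Ideal.exists_forall_sub_mem_ideal hq fun o => o.elim a fun j => c j
  refine ⟨u, (Int.modEq_iff_dvd.mpr ?_).symm, fun j hj => (Int.modEq_iff_dvd.mpr ?_).symm⟩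
  · exact Ideal.mem_span_singleton.mp (hu none)
  · exact Ideal.mem_span_singleton.mp (hu (some ⟨j, hj⟩))

lemma etaB_eq_true_iff {n : ℤ} : etaB b n = true ↔ ∀ i, 1 ≤ i → ¬ modulus b i ∣ n := by
  unfold etaB modulus
  split <;> simp_all

lemma etaB_eq_false (hi : 1 ≤ i) {n : ℤ} (h : modulus b i ∣ n) : etaB b n = false := by
  rw [← Bool.not_eq_true, etaB_eq_true_iff]
  exact fun hn => hn i hi h

lemma two_pow_dvd_modulus {k : ℕ} (h : k ≤ i) : (2 : ℤ) ^ k ∣ modulus b i :=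
  (pow_dvd_pow 2 h).mul_right _

lemma etaB_eq_true_iff_of_not_dvd {n : ℤ} {K : ℕ} (hn : ¬ (2 : ℤ) ^ (K + 1) ∣ n) :
    etaB b n = true ↔ ∀ i, 1 ≤ i → i ≤ K → ¬ modulus b i ∣ n := by
  refine etaB_eq_true_iff.trans ⟨fun h i hi _ => h i hi, fun h i hi hdvd => ?_⟩
  by_cases hiK : i ≤ K
  · exact h i hi hiK hdvd
  · exact hn ((two_pow_dvd_modulus (by omega)).trans hdvd)

lemma modulus_dvd_period {K : ℕ} (hi : 1 ≤ i) (hiK : i ≤ K) : modulus b i ∣ period b K :=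
  mul_dvd_mul (pow_dvd_pow 2 (by omega))
    (Finset.dvd_prod_of_mem _ (Finset.mem_Icc.mpr ⟨hi, hiK⟩))

lemma modulus_ne_zero (hgt : ∀ i, 1 ≤ i → 1 < b i) (hi : 1 ≤ i) : modulus b i ≠ 0 := by
  have := hgt i hi
  unfold modulus
  positivity

lemma period_pos (hgt : ∀ i, 1 ≤ i → 1 < b i) (K : ℕ) : 0 < period b K :=
  mul_pos (by positivity) (Finset.prod_pos fun j hj => by
    have := hgt j (Finset.mem_Icc.mp hj).1
    omega)

lemma period_mono (hgt : ∀ i, 1 ≤ i → 1 < b i) {K L : ℕ} (h : K ≤ L) :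
    period b K ≤ period b L :=
  Int.le_of_dvd (period_pos hgt L) (mul_dvd_mul (pow_dvd_pow 2 (by omega))
    (Finset.prod_dvd_prod_of_subset _ _ _ (Finset.Icc_subset_Icc_right h)))

lemma etaB_add_mul_period {n : ℤ} {N : ℕ} (hn : |n| ≤ N) (t : ℤ) :
    etaB b (n + t * period b (N + 1)) = etaB b n := by
  have hP : ∀ i, 1 ≤ i → i ≤ N + 1 →
      (modulus b i ∣ n + t * period b (N + 1) ↔ modulus b i ∣ n) :=
    fun i hi hiN => (dvd_add_left ((modulus_dvd_period hi hiN).mul_left t))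
  rcases eq_or_ne n 0 with rfl | hn0
  · rw [etaB_eq_false le_rfl ((hP 1 le_rfl (by omega)).mpr (dvd_zero _)),
      etaB_eq_false le_rfl (dvd_zero _)]
  have h2 : ¬ (2 : ℤ) ^ (N + 1 + 1) ∣ n := not_two_pow_dvd_of_abs_lt hn0 (hn.trans_lt
    (by exact_mod_cast (Nat.lt_two_pow_self).trans (Nat.pow_lt_pow_right (by norm_num) (by omega))))
  have h2' : ¬ (2 : ℤ) ^ (N + 1 + 1) ∣ n + t * period b (N + 1) := fun h =>
    h2 ((dvd_add_left ((pow_dvd_pow 2 le_rfl).mul_right _ |>.mul_left t)).mp h)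
  rw [Bool.eq_iff_iff, etaB_eq_true_iff_of_not_dvd h2, etaB_eq_true_iff_of_not_dvd h2']
  exact forall₂_congr fun i hi => forall_congr' fun hiN => not_congr (hP i hi hiN)

open Classical in
noncomputable def residueIndicator (b : ℕ → ℕ) (r : ℕ → ℤ) : ℤ → Bool := fun n =>
  decide (∀ i, 1 ≤ i → ¬ n ≡ r i [ZMOD modulus b i])

lemma residueIndicator_eq_true_iff {r : ℕ → ℤ} {n : ℤ} :
    residueIndicator b r n = true ↔ ∀ i, 1 ≤ i → ¬ n ≡ r i [ZMOD modulus b i] := by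
  simp [residueIndicator]

lemma residueIndicator_congr {r r' : ℕ → ℤ} {n n' : ℤ}
    (h : ∀ i, 1 ≤ i → (n ≡ r i [ZMOD modulus b i] ↔ n' ≡ r' i [ZMOD modulus b i])) :
    residueIndicator b r n = residueIndicator b r' n' := by
  rw [Bool.eq_iff_iff, residueIndicator_eq_true_iff, residueIndicator_eq_true_iff]
  exact forall₂_congr fun i hi => not_congr (h i hi)

lemma etaB_add (n s : ℤ) : etaB b (n + s) = residueIndicator b (fun _ => -s) n := by
  rw [Bool.eq_iff_iff, etaB_eq_true_iff, residueIndicator_eq_true_iff]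
  refine forall₂_congr fun i _ => not_congr ?_
  rw [Int.modEq_iff_dvd, ← dvd_neg]
  ring_nf

section Orbit

variable {α : Type*}

def shift (t : ℤ) (x : ℤ → α) : ℤ → α := fun n => x (n + t)

def orbit (x : ℤ → α) : Set (ℤ → α) := {y | ∃ t, y = shift t x}

lemma Xeta_eq_closure_orbit : Xeta b = closure (orbit (etaB b)) := rfl

@[simp] lemma shift_apply (t n : ℤ) (x : ℤ → α) : shift t x n = x (n + t) := rfl

lemma shift_shift (s t : ℤ) (x : ℤ → α) : shift s (shift t x) = shift (t + s) x := by
  funext n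
  simp [add_assoc, add_comm s]

@[simp] lemma shift_zero (x : ℤ → α) : shift 0 x = x := by
  funext n
  simp

lemma continuous_shift [TopologicalSpace α] (t : ℤ) :
    Continuous (shift t : (ℤ → α) → ℤ → α) :=
  continuous_pi fun n => continuous_apply (n + t)

lemma mem_closure_orbit_iff [TopologicalSpace α] [DiscreteTopology α] {x y : ℤ → α} :
    y ∈ closure (orbit x) ↔ ∀ N : ℕ, ∃ t, ∀ n : ℤ, |n| ≤ N → y n = x (n + t) := by
  rw [mem_closure_iff]
  refine ⟨fun h N => ?_, fun h O hO hy => ?_⟩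
  · have hcyl :
        IsOpen (⋂ n ∈ Finset.Icc (-(N : ℤ)) N, (fun w : ℤ → α => w n) ⁻¹' {y n}) :=
      isOpen_biInter_finset fun n _ => (isOpen_discrete _).preimage (continuous_apply n)
    obtain ⟨_, hw, t, rfl⟩ := h _ hcyl (Set.mem_iInter₂.mpr fun n _ => rfl)
    exact ⟨t, fun n hn => (Set.mem_iInter₂.mp hw n (Finset.mem_Icc.mpr (abs_le.mp hn))).symm⟩
  · obtain ⟨I, u, hu, hIO⟩ := isOpen_pi_iff.mp hO y hy
    obtain ⟨t, ht⟩ := h (I.sup Int.natAbs)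
    refine ⟨shift t x, hIO fun n hn => ?_, t, rfl⟩
    have hnN : |n| ≤ (I.sup Int.natAbs : ℕ) := by
      rw [Int.abs_eq_natAbs]
      exact_mod_cast Finset.le_sup (f := Int.natAbs) hn
    simpa [← ht n hnN] using (hu n hn).2

lemma mem_Xeta_iff {x : ℤ → Bool} :
    x ∈ Xeta b ↔ ∀ N : ℕ, ∃ s, ∀ n : ℤ, |n| ≤ N → x n = etaB b (n + s) := by
  rw [Xeta_eq_closure_orbit]
  exact mem_closure_orbit_iff

lemma etaB_mem_Xeta : etaB b ∈ Xeta b :=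
  subset_closure ⟨0, (shift_zero _).symm⟩

lemma shift_mem_closure_orbit [TopologicalSpace α] {x y : ℤ → α}
    (hy : y ∈ closure (orbit x)) (t : ℤ) : shift t y ∈ closure (orbit x) :=
  map_mem_closure (continuous_shift t) hy fun _ ⟨s, hs⟩ => ⟨s + t, by rw [hs, shift_shift]⟩

lemma closure_orbit_subset [TopologicalSpace α] {x y : ℤ → α} (hy : y ∈ closure (orbit x)) :
    closure (orbit y) ⊆ closure (orbit x) :=
  closure_minimal (by rintro _ ⟨t, rfl⟩; exact shift_mem_closure_orbit hy t) isClosed_closure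

lemma shift_mem_Xeta {x : ℤ → Bool} (hx : x ∈ Xeta b) (t : ℤ) : shift t x ∈ Xeta b := by
  rw [Xeta_eq_closure_orbit] at hx ⊢
  exact shift_mem_closure_orbit hx t

instance : CompactSpace (Xeta b) :=
  isCompact_iff_compactSpace.mp isClosed_closure.isCompact

def shiftX (b : ℕ → ℕ) (t : ℤ) : Xeta b ≃ₜ Xeta b where
  toFun y := ⟨shift t y, shift_mem_Xeta y.2 t⟩
  invFun y := ⟨shift (-t) y, shift_mem_Xeta y.2 (-t)⟩
  left_inv y := Subtype.ext (by simp [shift_shift])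
  right_inv y := Subtype.ext (by simp [shift_shift])
  continuous_toFun := ((continuous_shift t).comp continuous_subtype_val).subtype_mk _
  continuous_invFun := ((continuous_shift (-t)).comp continuous_subtype_val).subtype_mk _

@[simp] lemma shiftX_zero (y : Xeta b) : shiftX b 0 y = y :=
  Subtype.ext (shift_zero (y : ℤ → Bool))

lemma shiftX_shiftX (s t : ℤ) (y : Xeta b) : shiftX b s (shiftX b t y) = shiftX b (t + s) y :=
  Subtype.ext (shift_shift s t (y : ℤ → Bool))

end Orbit

-- Every window of `η` recurs periodically in `η`, hence in every point of `X_η`.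
lemma etaB_mem_closure_orbit (hgt : ∀ i, 1 ≤ i → 1 < b i) {y : ℤ → Bool}
    (hy : y ∈ Xeta b) :
    etaB b ∈ closure (orbit y) := by
  refine mem_closure_orbit_iff.mpr fun N => ?_
  set P := period b (N + 1)
  have hP : 0 < P := period_pos hgt (N + 1)
  obtain ⟨s, hs⟩ := mem_Xeta_iff.mp hy (N + P.toNat)
  refine ⟨-(s % P), fun n hn => ?_⟩
  have hwin : |n + -(s % P)| ≤ ((N + P.toNat : ℕ) : ℤ) := by
    have := Int.emod_nonneg s hP.ne'
    have := Int.emod_lt_of_pos s hP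
    rw [abs_le] at hn ⊢
    push_cast
    omega
  have hs' : n + -(s % P) + s = n + s / P * P := by linarith [Int.emod_add_mul_ediv s P]
  rw [hs _ hwin, hs', etaB_add_mul_period hn]

lemma eq_univ_of_shift_invariant (hgt : ∀ i, 1 ≤ i → 1 < b i) {A : Set (Xeta b)}
    (hA : IsClosed A) (hinv : ∀ y ∈ A, ∀ t, shiftX b t y ∈ A) (hne : A.Nonempty) :
    A = univ := by
  obtain ⟨y, hy⟩ := hne
  have hAc : IsClosed ((↑) '' A : Set (ℤ → Bool)) :=
    isClosed_closure.isClosedMap_subtype_val A hA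
  have hX : Xeta b ⊆ (↑) '' A :=
    calc Xeta b ⊆ closure (orbit (y : ℤ → Bool)) :=
          closure_orbit_subset (etaB_mem_closure_orbit hgt y.2)
      _ ⊆ (↑) '' A :=
          closure_minimal (by rintro _ ⟨t, rfl⟩; exact ⟨_, hinv y hy t, rfl⟩) hAc
  refine eq_univ_of_forall fun z => ?_
  obtain ⟨z', hz', hzz⟩ := hX z.2
  exact Subtype.ext hzz ▸ hz'

section Vanishing

variable {x : ℤ → Bool} {r r' : ℤ}

def Vanishes (b : ℕ → ℕ) (x : ℤ → Bool) (i : ℕ) (r : ℤ) : Prop :=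
  ∀ n, n ≡ r [ZMOD modulus b i] → x n = false

lemma Vanishes.of_modEq (h : Vanishes b x i r) (hr : r ≡ r' [ZMOD modulus b i]) :
    Vanishes b x i r' :=
  fun n hn => h n (hn.trans hr.symm)

lemma Vanishes.shift (h : Vanishes b x i r) (t : ℤ) : Vanishes b (shift t x) i (r - t) :=
  fun n hn => h (n + t) (by simpa using hn.add_right t)

lemma vanishes_etaB (hi : 1 ≤ i) : Vanishes b (etaB b) i 0 :=
  fun _ hn => etaB_eq_false hi (Int.modEq_zero_iff_dvd.mp hn)

lemma isClosed_setOf_vanishes (i : ℕ) (r : ℤ) :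
    IsClosed {x : ℤ → Bool | Vanishes b x i r} := by
  simp only [Vanishes, Set.ofPred_forall]
  exact isClosed_iInter fun n => isClosed_iInter fun _ =>
    isClosed_eq (continuous_apply n) continuous_const

-- Each shift of `η` vanishes on one of finitely many classes, a closed condition.
lemma exists_vanishes (hgt : ∀ i, 1 ≤ i → 1 < b i) (hx : x ∈ Xeta b) (hi : 1 ≤ i) :
    ∃ r, Vanishes b x i r := by
  have hM := modulus_ne_zero hgt hi
  have hcover :
      Xeta b ⊆ ⋃ r ∈ Set.Ico 0 ((modulus b i).natAbs : ℤ), {x | Vanishes b x i r} := by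
    refine closure_minimal ?_ ((Set.finite_Ico _ _).isClosed_biUnion
      fun r _ => isClosed_setOf_vanishes i r)
    rintro _ ⟨t, rfl⟩
    exact Set.mem_biUnion ⟨Int.emod_nonneg _ hM, Int.emod_lt _ hM⟩
      (((vanishes_etaB hi).shift t).of_modEq (Int.mod_modEq _ _).symm)
  obtain ⟨r, -, hr⟩ := Set.mem_iUnion₂.mp (hcover hx)
  exact ⟨r, hr⟩

lemma exists_modEq_not_two_pow_dvd (a : ℤ) (k : ℕ) :
    ∃ c, c ≡ a [ZMOD 2 ^ k] ∧ ¬ (2 : ℤ) ^ (k + 1) ∣ c := by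
  by_cases ha : (2 : ℤ) ^ (k + 1) ∣ a
  · refine ⟨a + 2 ^ k, by simp [Int.modEq_iff_dvd], fun h => ?_⟩
    have := Int.le_of_dvd (by positivity) ((dvd_add_right ha).mp h)
    have : (2 : ℤ) ^ k < 2 ^ (k + 1) := pow_lt_pow_right₀ (by norm_num) (by omega)
    omega
  · exact ⟨a, rfl, ha⟩

lemma exists_etaB_eq_true_progression (hb : Admissible b) (hi : 1 ≤ i)
    (hr : ¬ r ≡ 0 [ZMOD modulus b i]) :
    ∃ ρ, ρ ≡ r [ZMOD modulus b i] ∧ ∀ t, etaB b (ρ + t * period b i) = true := by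
  obtain ⟨c, hc, hc2⟩ := exists_modEq_not_two_pow_dvd r i
  obtain ⟨u, hu2, hub⟩ := exists_modEq_two_pow_and_modEq hb.odd hb.coprime (i + 1) c
    (F := Finset.Icc 1 i) (fun j hj => (Finset.mem_Icc.mp hj).1) (fun j => if j = i then r else 1)
  have hu : u ≡ r [ZMOD modulus b i] := (modEq_modulus_iff (hb.odd i hi)).mpr
    ⟨(hu2.of_dvd (pow_dvd_pow 2 (by omega))).trans hc,
      by simpa using hub i (Finset.mem_Icc.mpr ⟨hi, le_rfl⟩)⟩
  refine ⟨u, hu, fun t => ?_⟩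
  have hu2' : ¬ (2 : ℤ) ^ (i + 1) ∣ u + t * period b i := fun h =>
    hc2 (hu2.dvd_iff.mp ((dvd_add_left ((dvd_mul_right _ _).mul_left t)).mp h))
  refine (etaB_eq_true_iff_of_not_dvd hu2').mpr fun j hj hji hdvd => ?_
  have hju : modulus b j ∣ u := (dvd_add_left ((modulus_dvd_period hj hji).mul_left t)).mp hdvd
  rcases hji.lt_or_eq with hji | rfl
  · have h1 : (b j : ℤ) ∣ 1 := by
      have := (hub j (Finset.mem_Icc.mpr ⟨hj, hji.le⟩)).symm.dvd
      simpa [hji.ne] using (dvd_sub ((dvd_mul_left _ _).trans hju) this)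
    have := hb.one_lt j hj
    have := Int.le_of_dvd one_pos h1
    omega
  · exact hr (hu.symm.trans (Int.modEq_zero_iff_dvd.mpr hju))

lemma Vanishes.modEq_of_window (hb : Admissible b) (hi : 1 ≤ i) (hV : Vanishes b x i r)
    {s : ℤ} {N : ℕ} (hN : period b i ≤ N)
    (hs : ∀ n : ℤ, |n| ≤ N → x n = etaB b (n + s)) :
    r ≡ -s [ZMOD modulus b i] := by
  by_contra hcon
  obtain ⟨ρ, hρ, hρ1⟩ := exists_etaB_eq_true_progression hb hi (r := r + s)
    fun h => hcon (by simpa using h.add_right (-s))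
  set P := period b i
  have hP : 0 < P := period_pos hb.one_lt i
  have hn0 := Int.emod_nonneg (ρ - s) hP.ne'
  have hnP := Int.emod_lt_of_pos (ρ - s) hP
  have hn : (ρ - s) % P ≡ r [ZMOD modulus b i] :=
    ((Int.mod_modEq _ _).of_dvd (modulus_dvd_period hi le_rfl)).trans
      (by simpa using hρ.sub_right s)
  have htrue : etaB b ((ρ - s) % P + s) = true := by
    convert hρ1 (-((ρ - s) / P)) using 2
    linarith [Int.emod_add_mul_ediv (ρ - s) P]
  rw [← hs _ (by rw [abs_le]; omega), hV _ hn] at htrue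
  exact Bool.false_ne_true htrue

lemma Vanishes.modEq (hb : Admissible b) (hx : x ∈ Xeta b) (hi : 1 ≤ i)
    (h : Vanishes b x i r) (h' : Vanishes b x i r') : r ≡ r' [ZMOD modulus b i] := by
  obtain ⟨s, hs⟩ := mem_Xeta_iff.mp hx (period b i).toNat
  have hN := Int.self_le_toNat (period b i)
  exact (h.modEq_of_window hb hi hN hs).trans (h'.modEq_of_window hb hi hN hs).symm

-- Junk value `0` when `x` vanishes on no class.
open Classical in
noncomputable def residue (b : ℕ → ℕ) (x : ℤ → Bool) (i : ℕ) : ℤ :=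
  if h : ∃ r, Vanishes b x i r then h.choose else 0

lemma vanishes_residue (hgt : ∀ i, 1 ≤ i → 1 < b i) (hx : x ∈ Xeta b) (hi : 1 ≤ i) :
    Vanishes b x i (residue b x i) := by
  have h := exists_vanishes hgt hx hi
  rw [residue, dif_pos h]
  exact h.choose_spec

lemma residue_modEq_iff (hb : Admissible b) (hx : x ∈ Xeta b) (hi : 1 ≤ i) :
    residue b x i ≡ r [ZMOD modulus b i] ↔ Vanishes b x i r :=
  ⟨(vanishes_residue hb.one_lt hx hi).of_modEq,
    (vanishes_residue hb.one_lt hx hi).modEq hb hx hi⟩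

lemma residue_shift_modEq (hb : Admissible b) (hx : x ∈ Xeta b) (hi : 1 ≤ i) (t : ℤ) :
    residue b (shift t x) i ≡ residue b x i - t [ZMOD modulus b i] :=
  (residue_modEq_iff hb (shift_mem_Xeta hx t) hi).mpr ((vanishes_residue hb.one_lt hx hi).shift t)

end Vanishing

section Ambiguity

variable {x y : ℤ → Bool} {r r' : ℕ → ℤ} {n m : ℤ}

lemma apply_eq_true_of_not_modEq (hb : Admissible b) (hx : x ∈ Xeta b) (hi : 1 ≤ i)
    (h2 : ¬ n ≡ residue b x i [ZMOD 2 ^ i])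
    (hM : ∀ j, 1 ≤ j → ¬ n ≡ residue b x j [ZMOD modulus b j]) : x n = true := by
  obtain ⟨s, hs⟩ := mem_Xeta_iff.mp hx (n.natAbs + (period b i).toNat)
  have hcls : ∀ j, 1 ≤ j → j ≤ i → residue b x j ≡ -s [ZMOD modulus b j] :=
    fun j hj hji =>
    (vanishes_residue hb.one_lt hx hj).modEq_of_window hb hj (by
      have := period_mono hb.one_lt hji
      have := Int.self_le_toNat (period b i)
      have := abs_nonneg n
      push_cast
      omega) hs
  rw [hs n (by rw [Int.abs_eq_natAbs]; push_cast; omega), etaB_eq_true_iff]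
  intro j hj hdvd
  have hn : n ≡ -s [ZMOD modulus b j] := Int.modEq_iff_dvd.mpr (by
    rw [show -s - n = -(n + s) by ring]
    exact hdvd.neg_right)
  by_cases hji : j ≤ i
  · exact hM j hj (hn.trans (hcls j hj hji).symm)
  · exact h2 ((hn.of_dvd (two_pow_dvd_modulus (by omega))).trans
      ((hcls i hi le_rfl).of_dvd (two_pow_dvd_modulus le_rfl)).symm)

lemma apply_eq_residueIndicator (hb : Admissible b) (hx : x ∈ Xeta b) (hi : 1 ≤ i)
    (h2 : ¬ n ≡ residue b x i [ZMOD 2 ^ i]) : x n = residueIndicator b (residue b x) n := by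
  by_cases hM : ∃ j, 1 ≤ j ∧ n ≡ residue b x j [ZMOD modulus b j]
  · obtain ⟨j, hj, hnj⟩ := hM
    rw [vanishes_residue hb.one_lt hx hj n hnj, eq_comm, ← Bool.not_eq_true,
      residueIndicator_eq_true_iff]
    exact fun h => h j hj hnj
  · push Not at hM
    rw [apply_eq_true_of_not_modEq hb hx hi h2 hM, eq_comm, residueIndicator_eq_true_iff]
    exact hM

-- The positions at which the classes `r` leave the value of a point of `X_η` free.
def IsAmbiguous (b : ℕ → ℕ) (r : ℕ → ℤ) (m : ℤ) : Prop :=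
  ∀ i, 1 ≤ i → m ≡ r i [ZMOD 2 ^ i] ∧ ¬ m ≡ r i [ZMOD b i]

lemma IsAmbiguous.congr (h : IsAmbiguous b r m)
    (hr : ∀ i, 1 ≤ i → r i ≡ r' i [ZMOD modulus b i]) : IsAmbiguous b r' m :=
  fun i hi => ⟨(h i hi).1.trans ((hr i hi).of_dvd (two_pow_dvd_modulus le_rfl)),
    fun h' => (h i hi).2 (h'.trans ((hr i hi).of_dvd (dvd_mul_left _ _)).symm)⟩

lemma exists_isAmbiguous_of_ne (hb : Admissible b) (hx : x ∈ Xeta b) (hy : y ∈ Xeta b)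
    (hxy : x ≠ y) (h : ∀ i, 1 ≤ i → residue b x i ≡ residue b y i [ZMOD modulus b i]) :
    ∃ m, IsAmbiguous b (residue b x) m := by
  obtain ⟨m, hm⟩ := Function.ne_iff.mp hxy
  have h2 : ∀ i, 1 ≤ i → m ≡ residue b x i [ZMOD 2 ^ i] := by
    intro i hi
    by_contra h2
    refine hm ?_
    rw [apply_eq_residueIndicator hb hx hi h2, apply_eq_residueIndicator hb hy hi fun h' =>
      h2 (h'.trans ((h i hi).of_dvd (two_pow_dvd_modulus le_rfl)).symm)]
    exact residueIndicator_congr fun j hj =>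
      ⟨fun h' => h'.trans (h j hj), fun h' => h'.trans (h j hj).symm⟩
  refine ⟨m, fun i hi => ⟨h2 i hi, fun hbi => hm ?_⟩⟩
  have hmM : m ≡ residue b x i [ZMOD modulus b i] :=
    (modEq_modulus_iff (hb.odd i hi)).mpr ⟨h2 i hi, hbi⟩
  rw [vanishes_residue hb.one_lt hx hi m hmM,
    vanishes_residue hb.one_lt hy hi m (hmM.trans (h i hi))]

lemma vanishes_update_residueIndicator (h : IsAmbiguous b r m) (ε : Bool) (hi : 1 ≤ i) :
    Vanishes b (update (residueIndicator b r) m ε) i (r i) := by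
  intro n hn
  have hne : n ≠ m := by
    rintro rfl
    exact (h i hi).2 (hn.of_dvd (dvd_mul_left _ _))
  rw [update_of_ne hne, ← Bool.not_eq_true, residueIndicator_eq_true_iff]
  exact fun h' => h' i hi hn

-- At `m`, `2`-adic valuation exactly `K` gives `true`; divisibility by `modulus b (K + 1)`
-- gives `false`.
lemma exists_residueIndicator_eq_of_isAmbiguous (hb : Admissible b) (h : IsAmbiguous b r m)
    (K : ℕ) (ε : Bool) : ∃ u, (∀ j, 1 ≤ j → j ≤ K → u ≡ r j [ZMOD modulus b j]) ∧
      u ≡ m [ZMOD 2 ^ K] ∧ residueIndicator b (fun _ => u) m = ε := by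
  obtain ⟨u, hu2, hub⟩ := exists_modEq_two_pow_and_modEq hb.odd hb.coprime (K + 1)
    (m + if ε then 2 ^ K else 0) (F := Finset.Icc 1 (K + 1)) (fun j hj => (Finset.mem_Icc.mp hj).1)
    (fun j => if j = K + 1 ∧ ε = false then m else r j)
  have huK : u ≡ m [ZMOD 2 ^ K] := by
    refine (hu2.of_dvd (pow_dvd_pow 2 (Nat.le_succ K))).trans ?_
    cases ε <;> simp [Int.modEq_iff_dvd]
  have hur : ∀ j, 1 ≤ j → j ≤ K → u ≡ r j [ZMOD modulus b j] := fun j hj hjK =>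
    (modEq_modulus_iff (hb.odd j hj)).mpr
      ⟨(huK.of_dvd (pow_dvd_pow 2 hjK)).trans (h j hj).1,
        by simpa [show j ≠ K + 1 by omega] using hub j (Finset.mem_Icc.mpr ⟨hj, by omega⟩)⟩
  refine ⟨u, hur, huK, ?_⟩
  cases ε
  · rw [← Bool.not_eq_true, residueIndicator_eq_true_iff]
    refine fun hall => hall (K + 1) (by omega) ((modEq_modulus_iff (hb.odd _ (by omega))).mpr
      ⟨by simpa using hu2.symm, by simpa using (hub (K + 1) (by simp)).symm⟩)
  · refine residueIndicator_eq_true_iff.mpr fun j hj hmu => ?_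
    by_cases hjK : j ≤ K
    · exact (h j hj).2 ((hmu.trans (hur j hj hjK)).of_dvd (dvd_mul_left _ _))
    · have := ((hmu.of_dvd (two_pow_dvd_modulus (by omega))).trans hu2).dvd
      simp only [if_true, add_sub_cancel_left] at this
      have := Int.le_of_dvd (by positivity) this
      have : (2 : ℤ) ^ K < 2 ^ (K + 1) := pow_lt_pow_right₀ (by norm_num) (by omega)
      omega

lemma update_residueIndicator_mem_Xeta (hb : Admissible b) (h : IsAmbiguous b r m) (ε : Bool) :
    update (residueIndicator b r) m ε ∈ Xeta b := by
  refine mem_Xeta_iff.mpr fun N => ?_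
  obtain ⟨u, hur, hum, hu⟩ := exists_residueIndicator_eq_of_isAmbiguous hb h (N + m.natAbs) ε
  refine ⟨-u, fun n hn => ?_⟩
  rw [etaB_add, neg_neg]
  rcases eq_or_ne n m with rfl | hne
  · rw [update_self, hu]
  rw [update_of_ne hne]
  refine residueIndicator_congr fun j hj => ?_
  by_cases hjK : j ≤ N + m.natAbs
  · exact ⟨fun h' => h'.trans (hur j hj hjK).symm, fun h' => h'.trans (hur j hj hjK)⟩
  have hnm : ¬ n ≡ m [ZMOD 2 ^ (N + m.natAbs)] := fun h' => by
    refine hne (Int.eq_zero_of_abs_lt_dvd h'.dvd ?_ |> sub_eq_zero.mp |>.symm)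
    have : |m - n| ≤ N + m.natAbs := by
      rw [abs_le] at hn ⊢
      omega
    exact this.trans_lt (by exact_mod_cast Nat.lt_two_pow_self)
  have hdvd := two_pow_dvd_modulus (b := b) (show N + m.natAbs ≤ j by omega)
  exact iff_of_false (fun h' => hnm ((h'.of_dvd hdvd).trans (((h j hj).1.of_dvd
      (pow_dvd_pow 2 (by omega))).symm)))
    fun h' => hnm ((h'.of_dvd hdvd).trans hum)

end Ambiguity

variable {U : Xeta b → Xeta b} {δ : ℕ → ℤ}

lemma isAmbiguous_two_pow (hb : Admissible b) : IsAmbiguous b (fun i => 2 ^ i) 0 :=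
  fun i hi => ⟨Int.modEq_iff_dvd.mpr (by simp), fun h =>
    not_dvd_two_pow_of_odd (hb.odd i hi) (hb.one_lt i hi) i (by simpa using h.dvd)⟩

lemma not_isAmbiguous_zero {m : ℤ} : ¬ IsAmbiguous b 0 m := fun h => by
  have hm : m = 0 := eq_of_forall_modEq_two_pow fun i hi => (h i hi).1
  exact (h 1 le_rfl).2 (by simp [hm])

lemma eq_etaB_of_residue_modEq (hb : Admissible b) {z : ℤ → Bool} (hz : z ∈ Xeta b)
    (h : ∀ i, 1 ≤ i → residue b z i ≡ 0 [ZMOD modulus b i]) : z = etaB b := by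
  by_contra hne
  obtain ⟨m, hm⟩ := exists_isAmbiguous_of_ne hb hz etaB_mem_Xeta hne fun i hi =>
    (h i hi).trans ((residue_modEq_iff hb etaB_mem_Xeta hi).mpr (vanishes_etaB hi)).symm
  exact not_isAmbiguous_zero (hm.congr h)

lemma commute_shiftX (h : ∀ y, U (shiftX b 1 y) = shiftX b 1 (U y)) (t : ℤ) (y : Xeta b) :
    U (shiftX b t y) = shiftX b t (U y) := by
  induction t using Int.induction_on generalizing y with
  | zero => simp
  | succ n ih => rw [← shiftX_shiftX, h, ih, shiftX_shiftX]
  | pred n ih =>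
    apply (shiftX b 1).injective
    rw [← h, shiftX_shiftX, shiftX_shiftX, show -(n : ℤ) - 1 + 1 = -n by ring, ih]

lemma surjective_of_commute (hgt : ∀ i, 1 ≤ i → 1 < b i) (hU : Continuous U)
    (hcomm : ∀ t y, U (shiftX b t y) = shiftX b t (U y)) : Surjective U :=
  range_eq_univ.mp (eq_univ_of_shift_invariant hgt (isCompact_range hU).isClosed
    (by rintro _ ⟨y, rfl⟩ t; exact ⟨_, hcomm t y⟩)
    ⟨_, ⟨⟨etaB b, etaB_mem_Xeta⟩, rfl⟩⟩)

lemma isClosed_setOf_residue_modEq (hb : Admissible b) {Z : Type*} [TopologicalSpace Z]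
    {f g : Z → Xeta b} (hf : Continuous f) (hg : Continuous g) (hi : 1 ≤ i) (c : ℤ) :
    IsClosed {z | residue b (f z) i ≡ residue b (g z) i + c [ZMOD modulus b i]} := by
  have hM := modulus_ne_zero hb.one_lt hi
  have hset : {z | residue b (f z) i ≡ residue b (g z) i + c [ZMOD modulus b i]} =
      ⋃ d ∈ Set.Ico 0 ((modulus b i).natAbs : ℤ),
        {z | Vanishes b (g z) i d} ∩ {z | Vanishes b (f z) i (d + c)} := by
    ext z
    simp only [Set.mem_ofPred_eq, mem_iUnion, mem_inter_iff, exists_prop,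
      ← residue_modEq_iff hb (f z).2 hi, ← residue_modEq_iff hb (g z).2 hi]
    refine ⟨fun h => ⟨_, ⟨Int.emod_nonneg _ hM, Int.emod_lt _ hM⟩, (Int.mod_modEq _ _).symm,
      h.trans ((Int.mod_modEq _ _).symm.add_right c)⟩, ?_⟩
    rintro ⟨d, -, hgd, hfd⟩
    exact hfd.trans (hgd.symm.add_right c)
  rw [hset]
  exact (finite_Ico _ _).isClosed_biUnion fun d _ =>
    ((isClosed_setOf_vanishes i d).preimage (continuous_subtype_val.comp hg)).inter
      ((isClosed_setOf_vanishes i (d + c)).preimage (continuous_subtype_val.comp hf))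

def DisplacesResidues (U : Xeta b → Xeta b) (δ : ℕ → ℤ) : Prop :=
  ∀ i, 1 ≤ i → ∀ y : Xeta b, residue b (U y) i ≡ residue b y i + δ i [ZMOD modulus b i]

lemma exists_displacesResidues (hb : Admissible b) (hU : Continuous U)
    (hcomm : ∀ t y, U (shiftX b t y) = shiftX b t (U y)) : ∃ δ, DisplacesResidues U δ := by
  let η' : Xeta b := ⟨etaB b, etaB_mem_Xeta⟩
  refine ⟨fun i => residue b (U η') i - residue b η' i, fun i hi => ?_⟩
  refine eq_univ_iff_forall.mp (eq_univ_of_shift_invariant hb.one_lt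
    (isClosed_setOf_residue_modEq hb hU continuous_id hi _) (fun y hy t => ?_)
    ⟨η', show _ ≡ _ [ZMOD _] by rw [add_sub_cancel]⟩)
  change residue b (U y) i ≡ residue b y i + _ [ZMOD _] at hy
  change residue b (U (shiftX b t y)) i ≡ residue b (shiftX b t y) i + _ [ZMOD _]
  rw [hcomm]
  calc residue b (shift t (U y)) i ≡ residue b (U y) i - t [ZMOD modulus b i] :=
        residue_shift_modEq hb (U y).2 hi t
    _ ≡ residue b y i - t + (residue b (U η') i - residue b η' i) [ZMOD modulus b i] := by
        simpa [sub_add_eq_add_sub] using hy.sub_right t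
    _ ≡ residue b (shift t y) i + (residue b (U η') i - residue b η' i) [ZMOD modulus b i] :=
        (residue_shift_modEq hb y.2 hi t).symm.add_right _

-- The two points of `X_η` that differ only at an ambiguous position of `e` have distinct
-- preimages, both with classes `e - δ`.
lemma exists_isAmbiguous_sub (hb : Admissible b) (hsurj : Surjective U)
    (hδ : DisplacesResidues U δ) {e : ℕ → ℤ} {m₀ : ℤ} (he : IsAmbiguous b e m₀) :
    ∃ m, IsAmbiguous b (e - δ) m := by
  have hpre : ∀ ε : Bool, ∃ y : Xeta b, (U y : ℤ → Bool) = update (residueIndicator b e) m₀ ε ∧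
      ∀ i, 1 ≤ i → residue b y i ≡ (e - δ) i [ZMOD modulus b i] := by
    intro ε
    obtain ⟨y, hy⟩ := hsurj ⟨_, update_residueIndicator_mem_Xeta hb he ε⟩
    refine ⟨y, congrArg Subtype.val hy, fun i hi => ?_⟩
    have hUy : residue b (U y) i ≡ e i [ZMOD modulus b i] := (residue_modEq_iff hb (U y).2 hi).mpr
      (by rw [hy]; exact vanishes_update_residueIndicator he ε hi)
    exact Int.ModEq.add_right_cancel' (δ i) (by simpa using (hδ i hi y).symm.trans hUy)
  obtain ⟨y₁, hy₁, hr₁⟩ := hpre true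
  obtain ⟨y₀, hy₀, hr₀⟩ := hpre false
  have hne : (y₁ : ℤ → Bool) ≠ y₀ := fun h => by
    have h' :
        update (residueIndicator b e) m₀ true = update (residueIndicator b e) m₀ false := by
      rw [← hy₁, ← hy₀, Subtype.ext h]
    simpa using congrFun h' m₀
  obtain ⟨m, hm⟩ := exists_isAmbiguous_of_ne hb y₁.2 y₀.2 hne fun i hi =>
    (hr₁ i hi).trans (hr₀ i hi).symm
  exact ⟨m, hm.congr hr₁⟩

-- Moving the ambiguous position `0` of `i ↦ 2 ^ i` fixes the `2`-adic part of `δ`; the odd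
-- part is then forced by moving the ambiguous position `0` of a system `e` with a prescribed
-- class modulo `b i`.
lemma exists_modEq_of_displacesResidues (hb : Admissible b) (hsurj : Surjective U)
    (hδ : DisplacesResidues U δ) :
    ∃ k : ℤ, ∀ i, 1 ≤ i → δ i ≡ k [ZMOD modulus b i] := by
  obtain ⟨m₁, hm₁⟩ := exists_isAmbiguous_sub hb hsurj hδ (isAmbiguous_two_pow hb)
  have h2 : ∀ i, 1 ≤ i → δ i ≡ -m₁ [ZMOD 2 ^ i] := fun i hi =>
    calc δ i = 2 ^ i - (2 ^ i - δ i) := by ring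
      _ ≡ 0 - m₁ [ZMOD 2 ^ i] := (Int.modEq_zero_iff_dvd.mpr dvd_rfl).sub (hm₁ i hi).1.symm
      _ = -m₁ := zero_sub m₁
  refine ⟨-m₁, fun i hi => (modEq_modulus_iff (hb.odd i hi)).mpr ⟨h2 i hi, ?_⟩⟩
  by_contra hδi
  obtain ⟨c, hc2, hcb⟩ := exists_modEq_two_pow_and_modEq hb.odd hb.coprime i 0
    (F := {i}) (by simpa using hi) fun _ => δ i + m₁
  let e : ℕ → ℤ := update (fun j => 2 ^ j) i c
  have he2 : ∀ j, e j ≡ 0 [ZMOD 2 ^ j] := fun j => by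
    rcases eq_or_ne j i with rfl | hji
    · simpa [e] using hc2
    · simp [e, hji]
  have he : IsAmbiguous b e 0 := fun j hj => by
    rcases eq_or_ne j i with rfl | hji
    · refine ⟨(he2 j).symm, fun h0 => hδi ?_⟩
      have := h0.trans (by simpa [e] using hcb j (Finset.mem_singleton_self j))
      simpa using (this.add_right (-m₁)).symm
    · simpa [e, hji] using isAmbiguous_two_pow hb j hj
  obtain ⟨m₂, hm₂⟩ := exists_isAmbiguous_sub hb hsurj hδ he
  have hm₂₁ : m₂ = m₁ := eq_of_forall_modEq_two_pow fun j hj => by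
    have := (hm₂ j hj).1.trans (((he2 j).sub (h2 j hj)))
    simpa using this
  refine (hm₂ i hi).2 ?_
  have := (hcb i (Finset.mem_singleton_self i)).sub_right (δ i)
  simpa [e, hm₂₁] using this.symm

lemma eq_shiftX_of_displacesResidues (hb : Admissible b) (hU : Continuous U)
    (hcomm : ∀ t y, U (shiftX b t y) = shiftX b t (U y))
    (hδ : DisplacesResidues U δ) {k : ℤ} (hk : ∀ i, 1 ≤ i → δ i ≡ k [ZMOD modulus b i])
    (y : Xeta b) :
    U y = shiftX b (-k) y := by
  let η' : Xeta b := ⟨etaB b, etaB_mem_Xeta⟩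
  have hη' : shiftX b k (U η') = η' := Subtype.ext <| eq_etaB_of_residue_modEq hb
    (shiftX b k (U η')).2 fun i hi =>
      calc residue b (shift k (U η')) i ≡ residue b (U η') i - k [ZMOD modulus b i] :=
            residue_shift_modEq hb (U η').2 hi k
        _ ≡ residue b (etaB b) i + δ i - k [ZMOD modulus b i] := (hδ i hi η').sub_right k
        _ ≡ 0 + k - k [ZMOD modulus b i] :=
            (((residue_modEq_iff hb etaB_mem_Xeta hi).mpr (vanishes_etaB hi)).add
              (hk i hi)).sub_right k
        _ = 0 := by ring
  have hC := eq_univ_of_shift_invariant hb.one_lt (A := {y | shiftX b k (U y) = y})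
    (isClosed_eq ((shiftX b k).continuous.comp hU) continuous_id)
    (fun y hy t => by
      change shiftX b k (U (shiftX b t y)) = shiftX b t y
      rw [hcomm, shiftX_shiftX, add_comm, ← shiftX_shiftX, show shiftX b k (U y) = y from hy])
    ⟨η', hη'⟩
  have hy : shiftX b k (U y) = y := (eq_univ_iff_forall.mp hC y :)
  calc U y = shiftX b (-k) (shiftX b k (U y)) := by rw [shiftX_shiftX, add_neg_cancel, shiftX_zero]
    _ = shiftX b (-k) y := by rw [hy]

end BFree

theorem Xeta_coalescent (b : ℕ → ℕ)
    (hodd : ∀ i : ℕ, 1 ≤ i → Odd (b i))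
    (hgt : ∀ i : ℕ, 1 ≤ i → 1 < b i)
    (hcop : ∀ i j : ℕ, 1 ≤ i → 1 ≤ j → i ≠ j → Nat.Coprime (b i) (b j))
    (U : ↥(Xeta b) → ↥(Xeta b)) (hUcont : Continuous U)
    (hcomm : ∀ y z : ↥(Xeta b),
      (z : ℤ → Bool) = (fun m => (y : ℤ → Bool) (m + 1)) →
        ((U z : ℤ → Bool)) = fun m => (U y : ℤ → Bool) (m + 1)) :
    ∃ V : ↥(Xeta b) ≃ₜ ↥(Xeta b), ∀ y : ↥(Xeta b), V y = U y := by
  have hb : BFree.Admissible b := ⟨hodd, hgt, hcop⟩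
  have hcommZ := BFree.commute_shiftX fun y => Subtype.ext (hcomm y (BFree.shiftX b 1 y) rfl)
  obtain ⟨δ, hδ⟩ := BFree.exists_displacesResidues hb hUcont hcommZ
  obtain ⟨k, hk⟩ := BFree.exists_modEq_of_displacesResidues hb
    (BFree.surjective_of_commute hgt hUcont hcommZ) hδ
  exact ⟨BFree.shiftX b (-k), fun y =>
    (BFree.eq_shiftX_of_displacesResidues hb hUcont hcommZ hδ hk y).symm⟩
end
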